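/- Let g_λ be a filter function with qualification ν_g ≥ r ≥ 1/2 and constants b, γ_ν, and let T, L be positive self-adjoint operators with spectra in [0,U], λ ∈ (0,U]. Then ‖(λI + T)^{1/2}(g_λ(T)T − I) L^{r−1/2}‖ ≤ 2^r(b+1+γ_r) λ^r ‖(λI+T)^{-1}(λI+L)‖^{r−1/2} whenever 1/2 ≤ r ≤ 3/2. -/

import Mathlib

/-!
Write `A = λ + T`, `B = λ + L`, `t = r - 1/2` and insert `A^t A^{-t}` and `B^t B^{-t}`:
`A^{1/2} (g(T)T - 1) L^t = (A^{1/2} (g(T)T - 1) A^t) (A^{-t} B^t) (B^{-t} L^t)`.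
The first factor is a function of `T` of size `(λ+u)^r |1 - g(u)u| ≤ 2^r (λ^r + u^r) |1 - g(u)u|`,
which the filter properties bound by `2^r (b + 1 + γ_r) λ^r`; the last is a function of `L` of size
`(v/(λ+v))^t ≤ 1`. The middle factor is the Cordes inequality `‖A^{-t} B^t‖ ≤ ‖A^{-1} B‖^t`:
`z ↦ exp(-z log A) exp(z log B)` is entire, and since `exp(iyS)` is unitary for self-adjoint `S`
its norm depends only on `Re z`; it is `≤ 1` on `Re z = 0` and `‖A^{-1} B‖` on `Re z = 1`,
so the Hadamard three-lines theorem gives the bound at `z = t`.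
-/

open NormedSpace Complex.HadamardThreeLines

lemma Real.add_rpow_le_two_rpow_mul_add_rpow {a b p : ℝ} (ha : 0 ≤ a) (hb : 0 ≤ b)
    (hp : 0 ≤ p) : (a + b) ^ p ≤ 2 ^ p * (a ^ p + b ^ p) := calc
  (a + b) ^ p ≤ (2 * max a b) ^ p := by
    rw [two_mul]; gcongr; exacts [le_max_left a b, le_max_right a b]
  _ = 2 ^ p * max (a ^ p) (b ^ p) := by
    rw [Real.mul_rpow zero_le_two (ha.trans (le_max_left a b)), Real.rpow_max ha hb hp]
  _ ≤ 2 ^ p * (a ^ p + b ^ p) := by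
    gcongr; exact max_le_add_of_nonneg (by positivity) (by positivity)

lemma add_rpow_mul_le_of_le {lam u r x c d : ℝ} (hlam : 0 ≤ lam) (hu : 0 ≤ u) (hr : 0 ≤ r)
    (hx : 0 ≤ x) (hc : x ≤ c) (hd : x * u ^ r ≤ d * lam ^ r) :
    (lam + u) ^ r * x ≤ 2 ^ r * (c + d) * lam ^ r := calc
  (lam + u) ^ r * x ≤ 2 ^ r * (lam ^ r + u ^ r) * x := by
    gcongr; exact Real.add_rpow_le_two_rpow_mul_add_rpow hlam hu hr
  _ = 2 ^ r * (lam ^ r * x + x * u ^ r) := by ring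
  _ ≤ 2 ^ r * (lam ^ r * c + d * lam ^ r) := by gcongr
  _ = 2 ^ r * (c + d) * lam ^ r := by ring

lemma abs_one_sub_mul_le_of_forall_Ioc {g : ℝ → ℝ} {U b : ℝ} (hb : 0 ≤ b)
    (hg : ∀ u ∈ Set.Ioc 0 U, |g u * u| ≤ b) {u : ℝ} (hu : u ∈ Set.Icc 0 U) :
    |1 - g u * u| ≤ b + 1 := by
  rcases hu.1.eq_or_lt with rfl | hu₀
  · simpa using hb
  · calc |1 - g u * u| ≤ |1| + |g u * u| := abs_sub _ _
      _ ≤ b + 1 := by rw [abs_one, add_comm]; gcongr; exact hg u ⟨hu₀, hu.2⟩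

lemma abs_one_sub_mul_mul_rpow_le_of_forall_Ioc {g : ℝ → ℝ} {U lam γ r : ℝ} (hlam : 0 ≤ lam)
    (hγ : 0 ≤ γ) (hr : r ≠ 0) (hg : ∀ u ∈ Set.Ioc 0 U, |1 - g u * u| * u ^ r ≤ γ * lam ^ r)
    {u : ℝ} (hu : u ∈ Set.Icc 0 U) : |1 - g u * u| * u ^ r ≤ γ * lam ^ r := by
  rcases hu.1.eq_or_lt with rfl | hu₀
  · rw [Real.zero_rpow hr, mul_zero]; positivity
  · exact hg u ⟨hu₀, hu.2⟩

section CStarAlgebra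

variable {A : Type*} [CStarAlgebra A]

lemma exp_smul_eq_exp_re_smul_mul (S : A) (z : ℂ) :
    exp (z • S) = exp (z.re • S) * exp ((z.im * Complex.I) • S) := by
  let +nondep : NormedAlgebra ℚ A := .restrictScalars ℚ ℂ A
  rw [← exp_add_of_commute (((Commute.refl S).smul_left _).smul_right _), ← Complex.coe_smul,
    ← add_smul, Complex.re_add_im]

lemma exp_smul_eq_mul_exp_re_smul (S : A) (z : ℂ) :
    exp (z • S) = exp ((z.im * Complex.I) • S) * exp (z.re • S) := by
  let +nondep : NormedAlgebra ℚ A := .restrictScalars ℚ ℂ A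
  rw [← exp_add_of_commute (((Commute.refl S).smul_left _).smul_right _), ← Complex.coe_smul,
    ← add_smul, add_comm, Complex.re_add_im]

lemma exp_I_smul_mem_unitary {S : A} (hS : IsSelfAdjoint S) (y : ℝ) :
    exp ((y * Complex.I) • S) ∈ unitary A := by
  let +nondep : NormedAlgebra ℚ A := .restrictScalars ℚ ℂ A
  refine exp_mem_unitary_of_mem_skewAdjoint ?_
  rw [skewAdjoint.mem_iff, star_smul, hS.star_eq]
  simp [← neg_smul]

lemma norm_exp_smul_mul_exp_smul {S₁ S₂ : A} (hS₁ : IsSelfAdjoint S₁) (hS₂ : IsSelfAdjoint S₂)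
    (z : ℂ) : ‖exp (z • S₁) * exp (z • S₂)‖ = ‖exp (z.re • S₁) * exp (z.re • S₂)‖ := by
  rw [exp_smul_eq_mul_exp_re_smul S₁, exp_smul_eq_exp_re_smul_mul S₂, mul_assoc,
    ← mul_assoc (exp (z.re • S₁)),
    CStarRing.norm_coe_unitary_mul ⟨_, exp_I_smul_mem_unitary hS₁ z.im⟩,
    CStarRing.norm_mul_coe_unitary _ ⟨_, exp_I_smul_mem_unitary hS₂ z.im⟩]

variable [PartialOrder A] [StarOrderedRing A]

lemma exp_smul_log_eq_rpow {a : A} (ha : IsStrictlyPositive a) (x : ℝ) :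
    exp (x • CFC.log a) = a ^ x := by
  have hpos : ∀ u ∈ spectrum ℝ a, 0 < u := fun u hu => ha.spectrum_pos hu
  have hlog : ContinuousOn Real.log (spectrum ℝ a) :=
    Real.continuousOn_log.mono fun u hu => (hpos u hu).ne'
  rw [CFC.log, ← cfc_smul x Real.log a hlog, ← CFC.real_exp_eq_normedSpace_exp,
    ← cfc_comp' Real.exp (fun u => x • Real.log u) a (by fun_prop) (hlog.const_smul x),
    CFC.rpow_eq_cfc_real]
  exact cfc_congr fun u hu => by simp [Real.rpow_def_of_pos (hpos u hu), mul_comm]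

theorem norm_rpow_neg_mul_rpow_le {a b : A} (ha : IsStrictlyPositive a)
    (hb : IsStrictlyPositive b) {t : ℝ} (ht₀ : 0 ≤ t) (ht₁ : t ≤ 1) :
    ‖a ^ (-t) * b ^ t‖ ≤ ‖Ring.inverse a * b‖ ^ t := by
  let F : ℂ → A := fun z => exp (z • -CFC.log a) * exp (z • CFC.log b)
  have hF_ofReal (x : ℝ) : F x = a ^ (-x) * b ^ x := by
    simp only [F]
    rw [smul_neg, ← neg_smul, ← Complex.ofReal_neg, Complex.coe_smul, Complex.coe_smul,
      exp_smul_log_eq_rpow ha, exp_smul_log_eq_rpow hb]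
  have hF_norm (z : ℂ) : ‖F z‖ = ‖F z.re‖ := by
    simp only [F, norm_exp_smul_mul_exp_smul IsSelfAdjoint.log.neg IsSelfAdjoint.log z,
      Complex.coe_smul]
  have hF_diff : Differentiable ℂ F := fun z =>
    ((hasDerivAt_exp_smul_const _ z).differentiableAt.mul
      (hasDerivAt_exp_smul_const _ z).differentiableAt)
  have hF_bdd : BddAbove (norm ∘ F '' verticalClosedStrip 0 1) := by
    obtain ⟨C, hC⟩ := (isCompact_Icc (a := (0 : ℝ)) (b := 1)).bddAbove_image
      (hF_diff.continuous.comp Complex.continuous_ofReal).norm.continuousOn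
    exact ⟨C, by rintro - ⟨z, hz, rfl⟩; exact (hF_norm z).trans_le (hC ⟨z.re, hz, rfl⟩)⟩
  have hF_zero : ∀ z ∈ Complex.re ⁻¹' {0}, ‖F z‖ ≤ 1 := by
    rintro z (hz : z.re = 0)
    nontriviality A
    rw [hF_norm z, hz, Complex.ofReal_zero]
    simp [F]
  have hF_one : ∀ z ∈ Complex.re ⁻¹' {1}, ‖F z‖ ≤ ‖Ring.inverse a * b‖ := by
    rintro z (hz : z.re = 1)
    rw [hF_norm z, hz, hF_ofReal, CFC.inverse_eq_rpow_neg_one, CFC.rpow_one b]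
  have := norm_le_interp_of_mem_verticalClosedStrip' zero_lt_one
    (show (t : ℂ) ∈ verticalClosedStrip 0 1 from ⟨ht₀, ht₁⟩) hF_diff.diffContOnCl hF_bdd
    hF_zero hF_one
  simpa [hF_ofReal] using this

lemma norm_mul_le_through_rpow {a b : A} (ha : IsStrictlyPositive a) (hb : IsStrictlyPositive b)
    (x y : A) (t : ℝ) :
    ‖x * y‖ ≤ ‖x * a ^ t‖ * ‖a ^ (-t) * b ^ t‖ * ‖b ^ (-t) * y‖ := calc
  ‖x * y‖ = ‖(x * a ^ t) * (a ^ (-t) * b ^ t) * (b ^ (-t) * y)‖ := by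
    simp only [mul_assoc]
    rw [← mul_assoc (a ^ t), CFC.rpow_mul_rpow_neg t ha, one_mul, ← mul_assoc (b ^ t),
      CFC.rpow_mul_rpow_neg t hb, one_mul]
  _ ≤ _ := norm_mul₃_le

lemma spectrum_subset_Icc_of_nonneg {a : A} (ha : 0 ≤ a) : spectrum ℝ a ⊆ Set.Icc 0 ‖a‖ := by
  nontriviality A
  exact fun x hx => ⟨spectrum_nonneg_of_nonneg ha hx,
    (le_abs_self x).trans (spectrum.norm_le_norm_of_mem hx)⟩

lemma isStrictlyPositive_smul_one_add {a : A} (ha : 0 ≤ a) {lam : ℝ} (hlam : 0 < lam) :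
    IsStrictlyPositive (lam • (1 : A) + a) := by
  rw [← Algebra.algebraMap_eq_smul_one]
  exact (isStrictlyPositive_algebraMap hlam).add_nonneg ha

lemma continuousOn_add_rpow {a : A} (ha : 0 ≤ a) {lam : ℝ} (hlam : 0 < lam) (s : ℝ) :
    ContinuousOn (fun u => (lam + u) ^ s) (spectrum ℝ a) :=
  (continuousOn_const.add continuousOn_id).rpow_const fun _ hu =>
    Or.inl (add_pos_of_pos_of_nonneg hlam (spectrum_nonneg_of_nonneg ha hu)).ne'

lemma smul_one_add_rpow_eq_cfc {a : A} (ha : 0 ≤ a) {lam : ℝ} (hlam : 0 < lam) (s : ℝ) :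
    (lam • (1 : A) + a) ^ s = cfc (fun u => (lam + u) ^ s) a := by
  have hpos : ∀ u ∈ spectrum ℝ a, 0 < lam + u := fun u hu =>
    add_pos_of_pos_of_nonneg hlam (spectrum_nonneg_of_nonneg ha hu)
  have hcfc : lam • (1 : A) + a = cfc (fun u => lam + u) a := by
    rw [cfc_const_add lam (fun u => u) a, cfc_id' ℝ a, Algebra.algebraMap_eq_smul_one]
  rw [hcfc, CFC.cfc_rpow hpos]

lemma norm_smul_one_add_rpow_neg_mul_rpow_le_one {a : A} (ha : 0 ≤ a) {lam t : ℝ} (hlam : 0 < lam)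
    (ht : 0 ≤ t) : ‖(lam • (1 : A) + a) ^ (-t) * a ^ t‖ ≤ 1 := by
  rw [smul_one_add_rpow_eq_cfc ha hlam, CFC.rpow_eq_cfc_real ha,
    ← cfc_mul _ _ a (continuousOn_add_rpow ha hlam _)]
  refine norm_cfc_le zero_le_one fun u hu => ?_
  have hu0 : 0 ≤ u := spectrum_nonneg_of_nonneg ha hu
  have hlu : 0 < lam + u := by linarith
  rw [Real.norm_of_nonneg (by positivity), Real.rpow_neg hlu.le, inv_mul_le_one₀ (by positivity)]
  exact Real.rpow_le_rpow hu0 (by linarith) ht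

lemma norm_smul_one_add_rpow_mul_residual_mul_rpow_le {T : A} (hT : 0 ≤ T) {g : ℝ → ℝ}
    (hg : ContinuousOn g (spectrum ℝ T)) {lam p r c d : ℝ} (hlam : 0 < lam) (hr : 0 ≤ r)
    (hcd : 0 ≤ c + d) (hc : ∀ u ∈ spectrum ℝ T, |1 - g u * u| ≤ c)
    (hd : ∀ u ∈ spectrum ℝ T, |1 - g u * u| * u ^ r ≤ d * lam ^ r) :
    ‖(lam • (1 : A) + T) ^ p * (cfc g T * T - 1) * (lam • (1 : A) + T) ^ (r - p)‖
      ≤ 2 ^ r * (c + d) * lam ^ r := by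
  have hresidual : cfc g T * T - 1 = cfc (fun u => g u * u - 1) T := by
    rw [cfc_sub (fun u => g u * u) (fun _ => 1) T (hg.mul continuousOn_id),
      cfc_mul g (fun u => u) T hg, cfc_id' ℝ T, cfc_const_one ℝ T]
  rw [hresidual, smul_one_add_rpow_eq_cfc hT hlam, smul_one_add_rpow_eq_cfc hT hlam,
    ← cfc_mul _ _ T (continuousOn_add_rpow hT hlam p),
    ← cfc_mul (fun u => (lam + u) ^ p * (g u * u - 1)) _ T
      ((continuousOn_add_rpow hT hlam p).mul ((hg.mul continuousOn_id).sub continuousOn_const))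
      (continuousOn_add_rpow hT hlam (r - p))]
  refine norm_cfc_le (by positivity) fun u hu => ?_
  have hu0 : 0 ≤ u := spectrum_nonneg_of_nonneg hT hu
  have hlu : 0 < lam + u := by linarith
  have hnorm : ‖(lam + u) ^ p * (g u * u - 1) * (lam + u) ^ (r - p)‖
      = (lam + u) ^ r * |1 - g u * u| := by
    rw [Real.norm_eq_abs, abs_mul, abs_mul, abs_of_pos (Real.rpow_pos_of_pos hlu p),
      abs_of_pos (Real.rpow_pos_of_pos hlu _), abs_sub_comm, mul_right_comm,
      ← Real.rpow_add hlu, add_sub_cancel]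
  rw [hnorm]
  exact add_rpow_mul_le_of_le hlam.le hu0 hr (abs_nonneg _) (hc u hu) (hd u hu)

end CStarAlgebra

theorem filter_function_intermediate_bound_general {H : Type*} [NormedAddCommGroup H]
    [InnerProductSpace ℂ H] [CompleteSpace H]
    (T L : H →L[ℂ] H) (hT : 0 ≤ T) (hL : 0 ≤ L) {U : ℝ}
    (hTU : ‖T‖ ≤ U)
    (g : ℝ → ℝ) (hgcont : ContinuousOn g (Set.Icc 0 U))
    {lam b νg : ℝ} (hlam : lam ∈ Set.Ioc 0 U) (hb : 0 < b)
    (hg2 : ∀ u ∈ Set.Ioc (0:ℝ) U, |g u * u| ≤ b)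
    (γ : ℝ → ℝ) (hγ : ∀ ν ∈ Set.Ioc (0:ℝ) νg, 0 < γ ν)
    (hg3 : ∀ ν ∈ Set.Ioc (0:ℝ) νg, ∀ u ∈ Set.Ioc (0:ℝ) U,
      |1 - g u * u| * u ^ ν ≤ γ ν * lam ^ ν)
    {r : ℝ} (hr1 : (1:ℝ)/2 ≤ r) (hr2 : r ≤ 3/2) (hrν : r ≤ νg) :
    ‖CFC.rpow (lam • (1 : H →L[ℂ] H) + T) ((1:ℝ)/2) * (cfc g T * T - 1)
        * CFC.rpow L (r - 1/2)‖
      ≤ (2:ℝ) ^ r * (b + 1 + γ r) * lam ^ r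
          * ‖Ring.inverse (lam • (1 : H →L[ℂ] H) + T)
              * (lam • (1 : H →L[ℂ] H) + L)‖ ^ (r - 1/2) := by
  have ht₀ : 0 ≤ r - 1 / 2 := by linarith
  have ht₁ : r - 1 / 2 ≤ 1 := by linarith
  have hr : r ∈ Set.Ioc 0 νg := ⟨by linarith, hrν⟩
  have hσT : spectrum ℝ T ⊆ Set.Icc 0 U :=
    (spectrum_subset_Icc_of_nonneg hT).trans (Set.Icc_subset_Icc_right hTU)
  set A := lam • (1 : H →L[ℂ] H) + T
  set B := lam • (1 : H →L[ℂ] H) + L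
  set t := r - 1 / 2
  have hA : IsStrictlyPositive A := isStrictlyPositive_smul_one_add hT hlam.1
  have hB : IsStrictlyPositive B := isStrictlyPositive_smul_one_add hL hlam.1
  have hfilter :
      ‖A ^ ((1:ℝ)/2) * (cfc g T * T - 1) * A ^ t‖ ≤ 2 ^ r * (b + 1 + γ r) * lam ^ r :=
    norm_smul_one_add_rpow_mul_residual_mul_rpow_le hT (hgcont.mono hσT) hlam.1 (by linarith)
      (by linarith [hγ r hr])
      (fun u hu => abs_one_sub_mul_le_of_forall_Ioc hb.le hg2 (hσT hu))
      (fun u hu => abs_one_sub_mul_mul_rpow_le_of_forall_Ioc hlam.1.le (hγ r hr).le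
        (by linarith) (hg3 r hr) (hσT hu))
  have hcordes : ‖A ^ (-t) * B ^ t‖ ≤ ‖Ring.inverse A * B‖ ^ t :=
    norm_rpow_neg_mul_rpow_le hA hB ht₀ ht₁
  have hresolvent : ‖B ^ (-t) * L ^ t‖ ≤ 1 :=
    norm_smul_one_add_rpow_neg_mul_rpow_le_one hL hlam.1 ht₀
  calc ‖A ^ ((1:ℝ)/2) * (cfc g T * T - 1) * L ^ t‖
      ≤ ‖A ^ ((1:ℝ)/2) * (cfc g T * T - 1) * A ^ t‖ * ‖A ^ (-t) * B ^ t‖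
          * ‖B ^ (-t) * L ^ t‖ := norm_mul_le_through_rpow hA hB _ _ t
    _ ≤ ‖A ^ ((1:ℝ)/2) * (cfc g T * T - 1) * A ^ t‖ * ‖A ^ (-t) * B ^ t‖ :=
      mul_le_of_le_one_right (by positivity) hresolvent
    _ ≤ 2 ^ r * (b + 1 + γ r) * lam ^ r * ‖Ring.inverse A * B‖ ^ t :=
      mul_le_mul hfilter hcordes (norm_nonneg _) ((norm_nonneg _).trans hfilter)

/-- For a filter function `g = g_λ` with qualification `ν_g ≥ r` and constants `b`, `γ_ν`,
and positive operators `T`, `L` with spectra in `[0,U]`, `λ ∈ (0,U]`, and `1/2 ≤ r ≤ 3/2`: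
`‖(λI+T)^{1/2} (g(T)T − I) L^{r−1/2}‖ ≤ 2^r (b+1+γ_r) λ^r ‖(λI+T)^{-1}(λI+L)‖^{r−1/2}`. -/
theorem filter_function_intermediate_bound {H : Type*} [NormedAddCommGroup H]
    [InnerProductSpace ℂ H] [CompleteSpace H]
    (T L : H →L[ℂ] H) (hT : 0 ≤ T) (hL : 0 ≤ L) {U : ℝ} (hU : 0 < U)
    (hTU : ‖T‖ ≤ U) (hLU : ‖L‖ ≤ U)
    (g : ℝ → ℝ) (hgcont : ContinuousOn g (Set.Icc 0 U))
    {lam b νg : ℝ} (hlam : lam ∈ Set.Ioc 0 U) (hb : 0 < b)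
    (hg1 : ∀ u ∈ Set.Ioc (0:ℝ) U, |g u| ≤ b / lam)
    (hg2 : ∀ u ∈ Set.Ioc (0:ℝ) U, |g u * u| ≤ b)
    (γ : ℝ → ℝ) (hγ : ∀ ν ∈ Set.Ioc (0:ℝ) νg, 0 < γ ν)
    (hg3 : ∀ ν ∈ Set.Ioc (0:ℝ) νg, ∀ u ∈ Set.Ioc (0:ℝ) U,
      |1 - g u * u| * u ^ ν ≤ γ ν * lam ^ ν)
    {r : ℝ} (hr1 : (1:ℝ)/2 ≤ r) (hr2 : r ≤ 3/2) (hrν : r ≤ νg) :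
    ‖CFC.rpow (lam • (1 : H →L[ℂ] H) + T) ((1:ℝ)/2) * (cfc g T * T - 1)
        * CFC.rpow L (r - 1/2)‖
      ≤ (2:ℝ) ^ r * (b + 1 + γ r) * lam ^ r
          * ‖Ring.inverse (lam • (1 : H →L[ℂ] H) + T)
              * (lam • (1 : H →L[ℂ] H) + L)‖ ^ (r - 1/2) :=
  filter_function_intermediate_bound_general T L hT hL hTU g hgcont hlam hb hg2 γ hγ hg3 hr1 hr2 hrν
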